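/- arXiv:1510.07534 — 8 statements merged into one kernel-verified Lean document; each statement's English description precedes it below -/
import Mathlib

section
/- Let X and Y be locally compact Hausdorff spaces, let π : X → Y be a continuous map, and let (λ_y)_{y∈Y} be a continuous family of measures along π such that for every y in the image π(X) the topological support of λ_y is all of π⁻¹(y). Then π is an open map onto its image: for every open set U ⊆ X, the set π(U) is open in the subspace π(X) of Y. -/
open MeasureTheory

/-- The topological support of a measure: the set of points all of whose open
neighbourhoods have nonzero measure. -/
def measureSupport {X : Type*} [TopologicalSpace X] [MeasurableSpace X]
    (μ : Measure X) : Set X :=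
  {x | ∀ U : Set X, IsOpen U → x ∈ U → μ U ≠ 0}

/-- If `π : X → Y` is a continuous map between locally compact Hausdorff
spaces and `(λ_y)` is a continuous family of (Radon) measures along `π` whose members
have full support over every point of the image, then `π` is open onto its image. -/
theorem continuous_family_full_support_open_onto_image
    {X Y : Type*} [TopologicalSpace X] [LocallyCompactSpace X] [T2Space X]
    [TopologicalSpace Y] [LocallyCompactSpace Y] [T2Space Y]
    [MeasurableSpace X] [BorelSpace X]
    (π : X → Y) (hπ : Continuous π)
    (lam : Y → Measure X) (hRadon : ∀ y, (lam y).Regular)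
    (hfib : ∀ y, lam y (π ⁻¹' {y})ᶜ = 0)
    (hcont : ∀ f : X → ℂ, Continuous f → HasCompactSupport f →
      Continuous fun y => ∫ x, f x ∂(lam y))
    (hfull : ∀ y ∈ Set.range π, measureSupport (lam y) = π ⁻¹' {y}) :
    ∀ U : Set X, IsOpen U → IsOpen {y : Set.range π | (y : Y) ∈ π '' U} := by
  intro U hU
  rw [isOpen_iff_forall_mem_open]
  rintro ⟨y₀, hy₀⟩ hmem
  obtain ⟨x₀, hx₀U, hx₀π⟩ := hmem
  -- bump function
  obtain ⟨f, hf1, hf0, hfc, hf01⟩ :=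
    exists_continuous_one_zero_of_isCompact (isCompact_singleton (x := x₀))
      hU.isClosed_compl (by simpa using hx₀U)
  have hsuppU : Function.support f ⊆ U := fun z hz => by
    by_contra h
    exact hz (hf0 h)
  set g : X → ℂ := fun z => (f z : ℂ) with hg
  have hgc : Continuous g := Complex.continuous_ofReal.comp f.continuous
  have hgcs : HasCompactSupport g := by
    apply hfc.comp_left (g := fun r : ℝ => (r : ℂ)) (by simp)
  have hcg := hcont g hgc hgcs
  set V : Set Y := (fun y => ∫ z, g z ∂ lam y) ⁻¹' {0}ᶜ with hV
  have hVopen : IsOpen V := hcg.isOpen_preimage _ (isOpen_compl_singleton)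
  -- y₀ ∈ V
  have hint : ∀ y, ∫ z, g z ∂ lam y = ((∫ z, f z ∂ lam y : ℝ) : ℂ) := fun y =>
    integral_ofReal
  have hy₀V : y₀ ∈ V := by
    have : (0 : ℝ) < ∫ z, f z ∂ lam y₀ := by
      haveI := hRadon y₀
      have hint' : Integrable f (lam y₀) := f.continuous.integrable_of_hasCompactSupport hfc
      rw [integral_pos_iff_support_of_nonneg_ae
        (Filter.Eventually.of_forall fun z => (hf01 z).1) hint']
      have hx₀supp : x₀ ∈ measureSupport (lam y₀) := by
        rw [hfull y₀ hy₀]; simpa [hx₀π]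
      have hne := hx₀supp (Function.support f) f.continuous.isOpen_support
        (by simp [Function.mem_support, hf1 (Set.mem_singleton x₀)])
      exact pos_iff_ne_zero.mpr hne
    simp only [hV, Set.mem_preimage, Set.mem_compl_iff, Set.mem_singleton_iff, hint]
    exact_mod_cast this.ne'
  refine ⟨Subtype.val ⁻¹' V, ?_, continuous_subtype_val.isOpen_preimage _ hVopen, hy₀V⟩
  -- V ∩ range π ⊆ π '' U
  rintro ⟨y, hy⟩ hyV
  simp only [Set.mem_preimage, hV, Set.mem_compl_iff, Set.mem_singleton_iff] at hyV
  by_contra hnot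
  apply hyV
  have hfiber : π ⁻¹' {y} ∩ U = ∅ := by
    ext z
    simp only [Set.mem_inter_iff, Set.mem_preimage, Set.mem_singleton_iff, Set.mem_empty_iff_false,
      iff_false]
    rintro ⟨hz1, hz2⟩
    exact hnot ⟨z, hz2, hz1⟩
  have hae : g =ᵐ[lam y] 0 := by
    have : Function.support g ⊆ (π ⁻¹' {y})ᶜ := by
      intro z hz
      have hzU : z ∈ U := hsuppU (by simpa [hg, Function.mem_support] using hz)
      intro hzf
      exact Set.eq_empty_iff_forall_notMem.mp hfiber z ⟨hzf, hzU⟩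
    refine Filter.eventuallyEq_iff_exists_mem.mpr ⟨(Function.support g)ᶜ, ?_, fun z hz => by
      simpa [Function.mem_support, not_not] using hz⟩
    rw [MeasureTheory.mem_ae_iff]
    simp only [compl_compl]
    exact measure_mono_null this (hfib y)
  rw [integral_congr_ae hae]
  simp
end

section
/- Let X and Y be locally compact Hausdorff spaces, let π : X → Y be a continuous open surjection, and let (λ_y)_{y∈Y} be a continuous family of measures along π with full support (the support of λ_y equals π⁻¹(y) for every y). Then for every open set U ⊆ X and every nonnegative continuous compactly supported function g on Y with supp g ⊆ π(U), there exists a nonnegative continuous compactly supported function f on X with supp f ⊆ U such that ∫_X f dλ_y = g(y) for all y ∈ Y. -/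
open MeasureTheory

/-- Auxiliary: finite sums of continuous compactly supported nonnegative functions
supported in `U` are again such. -/
theorem aux_sum_props {X ι : Type*} [TopologicalSpace X] (U : Set X)
    (t : Finset ι) (h : ι → X → ℝ)
    (hc : ∀ i ∈ t, Continuous (h i)) (hcs : ∀ i ∈ t, HasCompactSupport (h i))
    (hnn : ∀ i ∈ t, ∀ x, 0 ≤ h i x) (hsupp : ∀ i ∈ t, tsupport (h i) ⊆ U) :
    Continuous (fun x => ∑ i ∈ t, h i x) ∧ HasCompactSupport (fun x => ∑ i ∈ t, h i x) ∧
      (∀ x, 0 ≤ ∑ i ∈ t, h i x) ∧ tsupport (fun x => ∑ i ∈ t, h i x) ⊆ U := by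
  classical
  induction t using Finset.induction_on with
  | empty =>
    refine ⟨continuous_const, ?_, by simp, ?_⟩
    · simpa [HasCompactSupport] using (by simp [tsupport] :
        tsupport (fun _ : X => (0:ℝ)) = ∅) ▸ isCompact_empty
    · simp only [Finset.sum_empty]
      rw [show (fun _ : X => (0:ℝ)) = 0 from rfl, tsupport_eq_empty_iff.mpr rfl]
      exact Set.empty_subset U
  | @insert a s hi ih =>
    have hca := hc a (by simp)
    have hcsa := hcs a (by simp)
    have hs1 : ∀ i ∈ s, Continuous (h i) := fun i hi' => hc i (by simp [hi'])
    have hs2 : ∀ i ∈ s, HasCompactSupport (h i) := fun i hi' => hcs i (by simp [hi'])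
    have hs3 : ∀ i ∈ s, ∀ x, 0 ≤ h i x := fun i hi' => hnn i (by simp [hi'])
    have hs4 : ∀ i ∈ s, tsupport (h i) ⊆ U := fun i hi' => hsupp i (by simp [hi'])
    obtain ⟨ihc, ihcs, ihnn, ihsupp⟩ := ih hs1 hs2 hs3 hs4
    have hsum : ∀ x : X, (∑ i ∈ insert a s, h i x) = h a x + ∑ i ∈ s, h i x :=
      fun _ => Finset.sum_insert hi
    have heq : (fun x => ∑ i ∈ insert a s, h i x)
        = fun x => h a x + ∑ i ∈ s, h i x := funext hsum
    refine ⟨?_, ?_, ?_, ?_⟩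
    · rw [heq]; exact hca.add ihc
    · rw [heq]; exact hcsa.add ihcs
    · intro x; rw [hsum x]; exact add_nonneg (hnn a (by simp) x) (ihnn x)
    · rw [heq]
      have hsub : tsupport (fun x => h a x + ∑ i ∈ s, h i x) ⊆
          tsupport (h a) ∪ tsupport (fun x => ∑ i ∈ s, h i x) := by
        apply closure_minimal _ ((isClosed_tsupport _).union (isClosed_tsupport _))
        intro x hx
        by_contra hx'
        rw [Set.mem_union] at hx'
        push_neg at hx'
        have e1 := image_eq_zero_of_notMem_tsupport hx'.1
        have e2 := image_eq_zero_of_notMem_tsupport hx'.2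
        exact Function.mem_support.1 hx (by simp only [e1, e2, add_zero])
      exact hsub.trans (Set.union_subset (hsupp a (by simp)) ihsupp)

/-- Renault, Lemme 1.1: given a continuous open surjection `π : X → Y`
between locally compact Hausdorff spaces and a continuous family of measures along `π`
with full support, every nonnegative `g ∈ C_c(Y)` supported in `π(U)` (for `U ⊆ X` open)
lifts to a nonnegative `f ∈ C_c(X)` supported in `U` with `Λ(f) = g`. -/
theorem continuous_family_surjective_lift
    {X Y : Type*} [TopologicalSpace X] [LocallyCompactSpace X] [T2Space X]
    [TopologicalSpace Y] [LocallyCompactSpace Y] [T2Space Y]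
    [MeasurableSpace X] [BorelSpace X]
    (π : X → Y) (hπ : Continuous π) (hopen : IsOpenMap π)
    (hsurj : Function.Surjective π)
    (lam : Y → Measure X) (hRadon : ∀ y, (lam y).Regular)
    (hfib : ∀ y, lam y (π ⁻¹' {y})ᶜ = 0)
    (hcont : ∀ f : X → ℂ, Continuous f → HasCompactSupport f →
      Continuous fun y => ∫ x, f x ∂(lam y))
    (hfull : ∀ y, measureSupport (lam y) = π ⁻¹' {y}) :
    ∀ U : Set X, IsOpen U →
      ∀ g : Y → ℝ, Continuous g → HasCompactSupport g → (∀ y, 0 ≤ g y) →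
        tsupport g ⊆ π '' U →
        ∃ f : X → ℝ, Continuous f ∧ HasCompactSupport f ∧ (∀ x, 0 ≤ f x) ∧
          tsupport f ⊆ U ∧ ∀ y, ∫ x, f x ∂(lam y) = g y := by
  classical
  intro U hU g hgc hgs hgnn hgsupp
  haveI : ∀ y, IsFiniteMeasureOnCompacts (lam y) := fun y => (hRadon y).toIsFiniteMeasureOnCompacts
  -- continuity of real integral functional
  have contInt : ∀ h : X → ℝ, Continuous h → HasCompactSupport h →
      Continuous fun y => ∫ x, h x ∂(lam y) := by
    intro h hc hcs
    have hC : Continuous fun x => (h x : ℂ) := Complex.continuous_ofReal.comp hc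
    have hCS : HasCompactSupport fun x => (h x : ℂ) :=
      hcs.comp_left (g := fun r : ℝ => (r : ℂ)) (by simp)
    have := hcont _ hC hCS
    have heq : (fun y => ∫ x, h x ∂(lam y)) =
        fun y => (∫ x, (h x : ℂ) ∂(lam y)).re := by
      funext y
      have : (∫ x, (h x : ℂ) ∂(lam y)) = ((∫ x, h x ∂(lam y) : ℝ) : ℂ) := integral_ofReal
      rw [this, Complex.ofReal_re]
    rw [heq]
    exact Complex.continuous_re.comp this
  set K := tsupport g with hK
  -- key pointwise step
  have key : ∀ y ∈ K, ∃ h : X → ℝ, Continuous h ∧ HasCompactSupport h ∧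
      (∀ x, 0 ≤ h x) ∧ tsupport h ⊆ U ∧ 0 < ∫ x, h x ∂(lam y) := by
    intro y hy
    obtain ⟨x, hxU, hxy⟩ := hgsupp hy
    obtain ⟨k, kcomp, kclosed, hxk, hkU⟩ :=
      exists_compact_closed_between (isCompact_singleton (x := x)) hU (by simpa using hxU)
    have hdisj : Disjoint {x} (interior k)ᶜ := by
      simp only [Set.disjoint_singleton_left, Set.mem_compl_iff, not_not]
      exact hxk rfl
    obtain ⟨h, h1, h0, hcs, hmem⟩ :=
      exists_continuous_one_zero_of_isCompact isCompact_singleton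
        isOpen_interior.isClosed_compl hdisj
    have hhc : Continuous h := h.continuous
    have hnn : ∀ z, 0 ≤ h z := fun z => (hmem z).1
    have hts : tsupport h ⊆ U := by
      have hsupp : Function.support h ⊆ interior k := by
        intro z hz
        by_contra hz'
        exact hz (h0 hz')
      exact (closure_minimal (hsupp.trans interior_subset) kclosed).trans hkU
    refine ⟨h, hhc, hcs, hnn, hts, ?_⟩
    have hint : Integrable h (lam y) := hhc.integrable_of_hasCompactSupport hcs
    rw [integral_pos_iff_support_of_nonneg hnn hint]
    have hxsupp : x ∈ Function.support h := by
      simp [Function.mem_support, h1 rfl]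
    have hxfib : x ∈ measureSupport (lam y) := by
      rw [hfull y]; simpa using hxy
    have hne : lam y (Function.support h) ≠ 0 :=
      hxfib _ (hhc.isOpen_support) hxsupp
    exact pos_iff_ne_zero.mpr hne
  choose! h hc1 hc2 hc3 hc4 hc5 using key
  -- open cover of K
  set c : Y → Set Y := fun y => {y' | 0 < ∫ x, h y x ∂(lam y')} with hc
  have hcover : K ⊆ ⋃ y ∈ K, c y := by
    intro y hy
    exact Set.mem_biUnion hy (hc5 y hy)
  have hopen' : ∀ y ∈ K, IsOpen (c y) :=
    fun y hy => isOpen_lt continuous_const (contInt _ (hc1 y hy) (hc2 y hy))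
  obtain ⟨b, hbK, hbfin, hbcov⟩ := hgs.elim_finite_subcover_image hopen' hcover
  set t : Finset Y := hbfin.toFinset with ht
  have hmem_t : ∀ i, i ∈ t ↔ i ∈ b := fun i => hbfin.mem_toFinset
  have htK : ∀ i ∈ t, i ∈ K := fun i hi => hbK ((hmem_t i).1 hi)
  -- the summed function H
  set H : X → ℝ := fun x => ∑ i ∈ t, h i x with hH
  obtain ⟨hHc, hHcs, hHnn, hHsupp⟩ := aux_sum_props U t h
    (fun i hi => hc1 i (htK i hi)) (fun i hi => hc2 i (htK i hi))
    (fun i hi => hc3 i (htK i hi)) (fun i hi => hc4 i (htK i hi))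
  set F : Y → ℝ := fun y => ∫ x, H x ∂(lam y) with hF
  have hFc : Continuous F := contInt H hHc hHcs
  have hFnn : ∀ y, 0 ≤ F y := fun y => integral_nonneg hHnn
  have hFsum : ∀ y, F y = ∑ i ∈ t, ∫ x, h i x ∂(lam y) := by
    intro y
    exact integral_finset_sum t fun i hi =>
      (hc1 i (htK i hi)).integrable_of_hasCompactSupport (hc2 i (htK i hi))
  have hFpos : ∀ y ∈ K, 0 < F y := by
    intro y hy
    obtain ⟨i, hib, hyc⟩ := Set.mem_iUnion₂.1 (hbcov hy)
    rw [hFsum y]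
    refine Finset.sum_pos' (fun j hj => integral_nonneg (hc3 j (htK j hj)))
      ⟨i, (hmem_t i).2 hib, hyc⟩
  -- V : open set where F > 0, contains K
  set V : Set Y := {y | 0 < F y} with hV
  have hVopen : IsOpen V := isOpen_lt continuous_const hFc
  have hKV : K ⊆ V := hFpos
  -- define φ = g / F
  set φ : Y → ℝ := fun y => g y / F y with hφ
  have hφ0 : ∀ y ∉ K, φ y = 0 := by
    intro y hy
    have : g y = 0 := image_eq_zero_of_notMem_tsupport hy
    simp [hφ, this]
  have hφc : Continuous φ := by
    rw [continuous_iff_continuousAt]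
    intro y
    by_cases hyV : y ∈ V
    · exact (hgc.continuousAt).div (hFc.continuousAt) (ne_of_gt hyV)
    · have hyK : y ∉ K := fun h => hyV (hKV h)
      have hev : φ =ᶠ[nhds y] fun _ => 0 := by
        filter_upwards [(isClosed_tsupport g).isOpen_compl.mem_nhds hyK] with z hz
        exact hφ0 z hz
      exact ContinuousAt.congr (continuousAt_const) hev.symm
  have hφnn : ∀ y, 0 ≤ φ y := fun y => div_nonneg (hgnn y) (hFnn y)
  -- the lifting function
  refine ⟨fun x => H x * φ (π x), hHc.mul (hφc.comp hπ), ?_, ?_, ?_, ?_⟩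
  · apply hHcs.mul_right
  · exact fun x => mul_nonneg (hHnn x) (hφnn (π x))
  · refine (closure_minimal ?_ (isClosed_tsupport H)).trans hHsupp
    intro x hx
    have : H x ≠ 0 := fun h => hx (by simp [Function.mem_support, h])
    exact subset_closure (Function.mem_support.2 this)
  · intro y
    have hae : (fun x => H x * φ (π x)) =ᵐ[lam y] fun x => H x * φ y := by
      rw [Filter.EventuallyEq, ae_iff]
      apply measure_mono_null _ (hfib y)
      intro x hx
      simp only [Set.mem_setOf_eq] at hx
      simp only [Set.mem_compl_iff, Set.mem_preimage, Set.mem_singleton_iff]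
      intro hxy
      exact hx (by rw [hxy])
    rw [integral_congr_ae hae, integral_mul_const]
    by_cases hF0 : F y = 0
    · have hyK : y ∉ K := fun h => (hFpos y h).ne' hF0
      have : g y = 0 := image_eq_zero_of_notMem_tsupport hyK
      simp [hφ0 y hyK, this, ← hF]
    · rw [show (∫ x, H x ∂(lam y)) = F y from rfl, hφ]
      field_simp
end

section
/- Let X, Y, Z be locally compact Hausdorff spaces, let π : X → Z and τ : Y → Z be continuous open surjections, and for each z ∈ Z let λ_z be a positive Radon measure on X with λ_z(X ∖ π⁻¹(z)) = 0. Then the following are equivalent: (a) for every continuous compactly supported f : X → ℂ, the function z ↦ ∫_X f dλ_z is continuous on Z; (b) for every continuous compactly supported F : X × Y → ℂ, the function y ↦ ∫_X F(x, y) dλ_{τ(y)}(x) is continuous on Y. (Statement (b) says that the family of measures λ₂_y = λ_{τ(y)} × δ_y along the second projection of the fibre product X ×_Z Y is continuous.) -/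
/-!
Since `τ` is a quotient map, (a) says that the integrals `∫ f dλ_{τ y}` depend continuously
on `y ∈ Y`, so only the family `μ_y = λ_{τ y}` over `Y` matters. Testing (b) on `f(x) g(y)`
with `g = 1` near a given point gives (a). Conversely, the slices `F(·, y)` are supported in
the compact projection `K` of `supp F` and converge to `F(·, y₀)` uniformly on `K` as `y → y₀`;
with a cutoff `φ ∈ C_c(X)` equal to `1` on `K`, the error is at most `ε ∫ φ dμ_y`, which
stays bounded because `y ↦ ∫ φ dμ_y` is continuous.
-/

open MeasureTheory Filter Topology Set

theorem HasCompactSupport.mul_prod {X Y M : Type*} [TopologicalSpace X] [TopologicalSpace Y]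
    [MulZeroClass M] {f : X → M} {g : Y → M} (hf : HasCompactSupport f)
    (hg : HasCompactSupport g) : HasCompactSupport fun p : X × Y => f p.1 * g p.2 := by
  refine .intro' (hf.prod hg) ((isClosed_tsupport f).prod (isClosed_tsupport g)) fun p hp => ?_
  rcases not_and_or.mp hp with h | h
  · rw [image_eq_zero_of_notMem_tsupport h, zero_mul]
  · rw [image_eq_zero_of_notMem_tsupport h, mul_zero]

theorem HasCompactSupport.comp_prodMk_const {X Y E : Type*} [TopologicalSpace X] [T2Space X]
    [TopologicalSpace Y] [Zero E] {F : X × Y → E} (hF : HasCompactSupport F) (y : Y) :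
    HasCompactSupport fun x => F (x, y) :=
  .intro' (hF.image continuous_fst) (hF.image continuous_fst).isClosed fun _ hx =>
    image_eq_zero_of_notMem_tsupport fun h => hx ⟨_, h, rfl⟩

theorem Continuous.tendstoUniformlyOn_comp_prodMk {X Y E : Type*} [TopologicalSpace X]
    [TopologicalSpace Y] [UniformSpace E] {F : X × Y → E} (hF : Continuous F) {K : Set X}
    (hK : IsCompact K) (y₀ : Y) :
    TendstoUniformlyOn (fun y x => F (x, y)) (fun x => F (x, y₀)) (𝓝 y₀) K :=
  let G : C(Y, C(X, E)) := ContinuousMap.curry ⟨F ∘ Prod.swap, hF.comp continuous_swap⟩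
  ContinuousMap.tendsto_iff_forall_isCompact_tendstoUniformlyOn.mp (G.continuous.tendsto y₀) K hK

theorem tendsto_integral_sub_of_tendstoUniformlyOn {X ι E : Type*} [MeasurableSpace X]
    [NormedAddCommGroup E] [NormedSpace ℝ E] {l : Filter ι} {μ : ι → Measure X}
    {f : ι → X → E} {g : X → E} {K : Set X} {φ : X → ℝ} {c : ℝ}
    (hf : ∀ i, Integrable (f i) (μ i)) (hg : ∀ i, Integrable g (μ i))
    (hφ : ∀ i, Integrable φ (μ i)) (hφ_nonneg : ∀ x, 0 ≤ φ x) (hφ_one : ∀ x ∈ K, φ x = 1)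
    (hfg : ∀ i, ∀ x ∉ K, f i x = g x) (hunif : TendstoUniformlyOn f g l K)
    (hφ_lim : Tendsto (fun i => ∫ x, φ x ∂μ i) l (𝓝 c)) :
    Tendsto (fun i => ∫ x, f i x ∂μ i - ∫ x, g x ∂μ i) l (𝓝 0) := by
  rw [Metric.tendsto_nhds]
  intro ε hε
  set δ := ε / (|c| + 1)
  have hδ : 0 < δ := by positivity
  have hc : c < |c| + 1 := by linarith [le_abs_self c]
  filter_upwards [Metric.tendstoUniformlyOn_iff.mp hunif δ hδ,
    hφ_lim.eventually (eventually_lt_nhds hc)] with i hclose hφi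
  have hpt : ∀ x, ‖f i x - g x‖ ≤ δ * φ x := fun x => by
    by_cases hx : x ∈ K
    · rw [← dist_eq_norm, dist_comm, hφ_one x hx, mul_one]
      exact (hclose x hx).le
    · rw [hfg i x hx, sub_self, norm_zero]
      exact mul_nonneg hδ.le (hφ_nonneg x)
  rw [dist_zero_right]
  calc ‖∫ x, f i x ∂μ i - ∫ x, g x ∂μ i‖ = ‖∫ x, (f i x - g x) ∂μ i‖ := by
        rw [integral_sub (hf i) (hg i)]
    _ ≤ ∫ x, δ * φ x ∂μ i :=
        norm_integral_le_of_norm_le ((hφ i).const_mul δ) (Eventually.of_forall hpt)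
    _ = δ * ∫ x, φ x ∂μ i := integral_const_mul δ _
    _ < δ * (|c| + 1) := by gcongr
    _ = ε := div_mul_cancel₀ ε (by positivity)

section

variable {X Y 𝕜 : Type*} [TopologicalSpace X] [MeasurableSpace X] [TopologicalSpace Y]
  [RCLike 𝕜] {μ : Y → Measure X}

theorem continuous_integral_slice_of_continuous_integral [T2Space X] [LocallyCompactSpace X]
    [OpensMeasurableSpace X] [∀ y, IsFiniteMeasureOnCompacts (μ y)]
    (h : ∀ f : X → 𝕜, Continuous f → HasCompactSupport f → Continuous fun y => ∫ x, f x ∂μ y)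
    {F : X × Y → 𝕜} (hF : Continuous F) (hFc : HasCompactSupport F) :
    Continuous fun y => ∫ x, F (x, y) ∂μ y := by
  have hslice : ∀ y, Continuous fun x => F (x, y) := fun y => by fun_prop
  set K := Prod.fst '' tsupport F
  have hvanish : ∀ y, ∀ x ∉ K, F (x, y) = 0 := fun _ _ hx =>
    image_eq_zero_of_notMem_tsupport fun h => hx ⟨_, h, rfl⟩
  obtain ⟨φ, hφK, -, hφc, hφ01⟩ := exists_continuous_one_zero_of_isCompact
    (hFc.image continuous_fst) isClosed_empty (disjoint_empty K)
  have hφ : Continuous fun y => ∫ x, φ x ∂μ y := by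
    have := RCLike.continuous_re.comp (h (fun x => (φ x : 𝕜)) (by fun_prop)
      (hφc.comp_left RCLike.ofReal_zero))
    simpa only [Function.comp_def, integral_ofReal, RCLike.ofReal_re] using this
  rw [continuous_iff_continuousAt]
  intro y₀
  have hdiff :
      Tendsto (fun y => ∫ x, F (x, y) ∂μ y - ∫ x, F (x, y₀) ∂μ y) (𝓝 y₀) (𝓝 0) :=
    tendsto_integral_sub_of_tendstoUniformlyOn
      (fun y => (hslice y).integrable_of_hasCompactSupport (hFc.comp_prodMk_const y))
      (fun _ => (hslice y₀).integrable_of_hasCompactSupport (hFc.comp_prodMk_const y₀))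
      (fun _ => φ.continuous.integrable_of_hasCompactSupport hφc)
      (fun x => (hφ01 x).1) hφK
      (fun y x hx => by rw [hvanish y x hx, hvanish y₀ x hx])
      (hF.tendstoUniformlyOn_comp_prodMk (hFc.image continuous_fst) y₀) (hφ.tendsto y₀)
  have hfixed := (h _ (hslice y₀) (hFc.comp_prodMk_const y₀)).tendsto y₀
  simpa only [ContinuousAt, sub_add_cancel, zero_add] using hdiff.add hfixed

theorem continuous_integral_of_continuous_integral_slice [LocallyCompactSpace Y] [RegularSpace Y]
    (h : ∀ F : X × Y → 𝕜, Continuous F → HasCompactSupport F →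
      Continuous fun y => ∫ x, F (x, y) ∂μ y)
    {f : X → 𝕜} (hf : Continuous f) (hfc : HasCompactSupport f) :
    Continuous fun y => ∫ x, f x ∂μ y := by
  rw [continuous_iff_continuousAt]
  intro y₀
  obtain ⟨K, hK, hKy₀⟩ := exists_compact_mem_nhds y₀
  obtain ⟨g, hgK, -, hgc, -⟩ :=
    exists_continuous_one_zero_of_isCompact hK isClosed_empty (disjoint_empty K)
  have hg : HasCompactSupport fun y => (g y : 𝕜) := hgc.comp_left RCLike.ofReal_zero
  refine (h _ (by fun_prop) (hfc.mul_prod hg)).continuousAt.congr ?_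
  filter_upwards [hKy₀] with y hy
  simp [hgK hy]

theorem forall_continuous_integral_iff_forall_continuous_integral_slice [T2Space X]
    [LocallyCompactSpace X] [OpensMeasurableSpace X] [LocallyCompactSpace Y] [RegularSpace Y]
    [∀ y, IsFiniteMeasureOnCompacts (μ y)] :
    (∀ f : X → 𝕜, Continuous f → HasCompactSupport f → Continuous fun y => ∫ x, f x ∂μ y) ↔
      ∀ F : X × Y → 𝕜, Continuous F → HasCompactSupport F →
        Continuous fun y => ∫ x, F (x, y) ∂μ y :=
  ⟨fun h _ => continuous_integral_slice_of_continuous_integral h,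
    fun h _ => continuous_integral_of_continuous_integral_slice h⟩

end

theorem continuous_family_iff_fibre_product_family_continuous_general
    {X Y Z : Type*} [TopologicalSpace X] [LocallyCompactSpace X] [T2Space X]
    [TopologicalSpace Y] [LocallyCompactSpace Y] [T2Space Y]
    [TopologicalSpace Z]
    [MeasurableSpace X] [BorelSpace X]
    (τ : Y → Z) (hτ : Continuous τ) (hτopen : IsOpenMap τ)
    (hτsurj : Function.Surjective τ)
    (lam : Z → Measure X) (hRadon : ∀ z, (lam z).Regular) :
    (∀ f : X → ℂ, Continuous f → HasCompactSupport f →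
        Continuous fun z => ∫ x, f x ∂(lam z)) ↔
    (∀ F : X × Y → ℂ, Continuous F → HasCompactSupport F →
        Continuous fun y => ∫ x, F (x, y) ∂(lam (τ y))) := by
  have : ∀ y, IsFiniteMeasureOnCompacts (lam (τ y)) := fun y =>
    (hRadon (τ y)).toIsFiniteMeasureOnCompacts
  simp only [(hτopen.isQuotientMap hτ hτsurj).continuous_iff, Function.comp_def]
  exact forall_continuous_integral_iff_forall_continuous_integral_slice

/-- Renault, Lemme 1.2: for continuous open surjections `π : X → Z`,
`τ : Y → Z` and a family `(λ_z)` of Radon measures concentrated on the fibres of `π`,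
the family `(λ_z)` is continuous along `π` iff the family `λ₂_y = λ_{τ(y)} × δ_y`
along the second projection of the fibre product is continuous; the latter amounts to
continuity of `y ↦ ∫ F(x, y) dλ_{τ(y)}(x)` for all `F ∈ C_c(X × Y)`. -/
theorem continuous_family_iff_fibre_product_family_continuous
    {X Y Z : Type*} [TopologicalSpace X] [LocallyCompactSpace X] [T2Space X]
    [TopologicalSpace Y] [LocallyCompactSpace Y] [T2Space Y]
    [TopologicalSpace Z] [LocallyCompactSpace Z] [T2Space Z]
    [MeasurableSpace X] [BorelSpace X]
    (π : X → Z) (hπ : Continuous π) (hπopen : IsOpenMap π)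
    (hπsurj : Function.Surjective π)
    (τ : Y → Z) (hτ : Continuous τ) (hτopen : IsOpenMap τ)
    (hτsurj : Function.Surjective τ)
    (lam : Z → Measure X) (hRadon : ∀ z, (lam z).Regular)
    (hfib : ∀ z, lam z (π ⁻¹' {z})ᶜ = 0) :
    (∀ f : X → ℂ, Continuous f → HasCompactSupport f →
        Continuous fun z => ∫ x, f x ∂(lam z)) ↔
    (∀ F : X × Y → ℂ, Continuous F → HasCompactSupport F →
        Continuous fun y => ∫ x, F (x, y) ∂(lam (τ y))) :=
  continuous_family_iff_fibre_product_family_continuous_general τ hτ hτopen hτsurj lam hRadon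
end

section
/- Let G and H be locally compact Hausdorff groups with left Haar measures α and β and modular functions δ_G and δ_H, and let φ : H → G be a continuous group homomorphism. Then for every continuous compactly supported function f : H × G → ℂ, ∫_G ∫_H f(η⁻¹, γ) dβ(η) dα⁻¹(γ) = ∫_G ∫_H f(η, φ(η)⁻¹γ) · (δ_G(φ(η)) / δ_H(η)) dβ(η) dα⁻¹(γ). (This expresses that the right Haar measure α⁻¹ on G is quasi-invariant for the action η·γ = φ(η)γ of H on G, with adjoining function Δ(η, x) = δ_G(φ(η))/δ_H(η).) -/
/-!
The modular function `δ` is the inverse of the modular character `Δ = modularCharacter`, and `Δ`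
is continuous because `Δ(c) ∫ g dα = ∫ g(γc) dα(γ)`; so `δ` is a continuous positive character.
Comparing the left Haar measure `α` with the right Haar measure `α⁻¹`
(`integral_isMulLeftInvariant_isMulRightInvariant_combo`) gives `∫ f(x⁻¹) dα = ∫ f(x) δ(x)⁻¹ dα`,
and left translation by `c` scales `α⁻¹` by `δ(c)`. The identity follows by applying the first fact
on `H`, Fubini, the second fact on `G` with `c = φ(η)`, and Fubini again.
-/

open MeasureTheory Measure Function
open scoped NNReal

theorem HasCompactSupport.comp_of_leftInverse {X Y M : Type*} [TopologicalSpace X] [R1Space X]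
    [TopologicalSpace Y] [Zero M] {f : Y → M} (hf : HasCompactSupport f) {e : X → Y}
    {s : Y → X} (hs : Continuous s) (hse : LeftInverse s e) : HasCompactSupport (f ∘ e) :=
  HasCompactSupport.intro (hf.image hs) fun x hx => by
    by_contra h
    exact hx ⟨e x, subset_tsupport f h, hse x⟩

theorem MeasureTheory.Measure.integral_inv_eq {G E : Type*} [Group G] [MeasurableSpace G]
    [MeasurableInv G] [NormedAddCommGroup E] [NormedSpace ℝ E] (μ : Measure G) (f : G → E) :
    ∫ x, f x ∂μ.inv = ∫ x, f x⁻¹ ∂μ :=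
  integral_map_equiv (MeasurableEquiv.inv G) f

section Group

variable {G : Type*} [Group G] [TopologicalSpace G] [IsTopologicalGroup G] [LocallyCompactSpace G]

theorem integral_comp_mul_right_eq_modularCharacter_mul [MeasurableSpace G] [BorelSpace G]
    (μ : Measure G) [μ.IsHaarMeasure] {f : G → ℝ} (hf : Continuous f)
    (h'f : HasCompactSupport f) (c : G) :
    ∫ x, f (x * c) ∂μ = modularCharacter c * ∫ x, f x ∂μ := by
  rw [← integral_map (by fun_prop) hf.aestronglyMeasurable,
    integral_isMulLeftInvariant_eq_smul_of_hasCompactSupport _ μ hf h'f,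
    integral_smul_nnreal_measure, ← modularCharacterFun_eq_haarScalarFactor]
  rfl

theorem continuous_modularCharacter : Continuous (modularCharacter : G → ℝ≥0) := by
  borelize G
  obtain ⟨⟨g, hg⟩, h'g, g_nonneg, g_one⟩ := exists_continuous_nonneg_pos (1 : G)
  have hg_pos : 0 < ∫ x, g x ∂haar :=
    hg.integral_pos_of_hasCompactSupport_nonneg_nonzero h'g g_nonneg g_one
  have h : (fun c : G => (modularCharacter c : ℝ)) =
      fun c => (∫ x, g (x⁻¹ * c) ∂haar.inv) / ∫ x, g x ∂haar := by
    ext c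
    rw [integral_inv_eq]
    simp only [inv_inv, integral_comp_mul_right_eq_modularCharacter_mul haar hg h'g]
    field_simp
  rw [NNReal.isEmbedding_coe.continuous_iff, comp_def, h]
  exact (continuous_integral_apply_inv_mul hg h'g).div_const _

theorem integral_comp_inv_eq_integral_modularCharacter_mul [MeasurableSpace G] [BorelSpace G]
    (μ : Measure G) [μ.IsHaarMeasure] {f : G → ℝ} (hf : Continuous f)
    (h'f : HasCompactSupport f) :
    ∫ x, f x⁻¹ ∂μ = ∫ x, modularCharacter x * f x ∂μ := by
  obtain ⟨⟨g, hg⟩, h'g, g_nonneg, g_one⟩ := exists_continuous_nonneg_pos (1 : G)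
  have hg_pos : 0 < ∫ x, g x ∂μ :=
    hg.integral_pos_of_hasCompactSupport_nonneg_nonzero h'g g_nonneg g_one
  have hD : ∀ y, ∫ z, g (z⁻¹ * y) ∂μ.inv = modularCharacter y * ∫ x, g x ∂μ := fun y => by
    simp only [integral_inv_eq, inv_inv, integral_comp_mul_right_eq_modularCharacter_mul μ hg h'g]
  have key := integral_isMulLeftInvariant_isMulRightInvariant_combo (μ := μ) (ν := μ.inv)
    (hf.comp continuous_inv) (h'f.comp_homeomorph (Homeomorph.inv G)) hg h'g g_nonneg g_one
  simp only [hD, comp_apply, inv_inv, mul_inv, ← mul_assoc, integral_mul_const,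
    integral_inv_eq, map_inv, NNReal.coe_inv] at key
  rw [key, inv_mul_cancel_right₀ hg_pos.ne']
  simp_rw [mul_comm]

theorem integral_comp_inv_eq_integral_modularCharacter_smul {𝕜 : Type*} [RCLike 𝕜]
    [MeasurableSpace G] [BorelSpace G]
    (μ : Measure G) [μ.IsHaarMeasure] {f : G → 𝕜} (hf : Continuous f)
    (h'f : HasCompactSupport f) :
    ∫ x, f x⁻¹ ∂μ = ∫ x, (modularCharacter x : ℝ) • f x ∂μ := by
  have hΔ : Continuous fun x : G => (modularCharacter x : ℝ) :=
    NNReal.continuous_coe.comp continuous_modularCharacter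
  have h_int : Integrable (fun x => f x⁻¹) μ :=
    (hf.comp continuous_inv).integrable_of_hasCompactSupport
      (h'f.comp_homeomorph (Homeomorph.inv G))
  have h'_int : Integrable (fun x => (modularCharacter x : ℝ) • f x) μ :=
    (hΔ.smul hf).integrable_of_hasCompactSupport h'f.smul_left
  refine RCLike.ext ?_ ?_
  · rw [← integral_re h_int, ← integral_re h'_int]
    simpa [RCLike.smul_re] using integral_comp_inv_eq_integral_modularCharacter_mul μ
      (RCLike.continuous_re.comp hf) (h'f.comp_left RCLike.zero_re)
  · rw [← integral_im h_int, ← integral_im h'_int]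
    simpa [RCLike.smul_im] using integral_comp_inv_eq_integral_modularCharacter_mul μ
      (RCLike.continuous_im.comp hf) (h'f.comp_left RCLike.zero_im)

end Group

def IsModularFunction {G : Type*} [Group G] [TopologicalSpace G] [MeasurableSpace G]
    (μ : Measure G) (δ : G → ℝ) : Prop :=
  ∀ f : G → ℂ, Continuous f → HasCompactSupport f → ∀ c : G,
    ∫ γ, f (γ * c) ∂μ = ((δ c : ℂ))⁻¹ * ∫ γ, f γ ∂μ

namespace IsModularFunction

variable {G : Type*} [Group G] [TopologicalSpace G] [IsTopologicalGroup G] [LocallyCompactSpace G]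
  [MeasurableSpace G] [BorelSpace G] {μ : Measure G} [μ.IsHaarMeasure] {δ : G → ℝ}

theorem eq_inv_modularCharacter (hδ : IsModularFunction μ δ) (c : G) :
    δ c = (modularCharacter c : ℝ)⁻¹ := by
  obtain ⟨⟨g, hg⟩, h'g, g_nonneg, g_one⟩ := exists_continuous_nonneg_pos (1 : G)
  have hg_pos : 0 < ∫ x, g x ∂μ :=
    hg.integral_pos_of_hasCompactSupport_nonneg_nonzero h'g g_nonneg g_one
  have h := hδ (fun x => (g x : ℂ)) (by fun_prop) (h'g.comp_left Complex.ofReal_zero) c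
  rw [integral_complex_ofReal, integral_complex_ofReal,
    integral_comp_mul_right_eq_modularCharacter_mul μ hg h'g] at h
  norm_cast at h
  rw [← inv_inv (δ c), mul_right_cancel₀ hg_pos.ne' h]

theorem pos (hδ : IsModularFunction μ δ) (c : G) : 0 < δ c := by
  rw [hδ.eq_inv_modularCharacter]
  exact inv_pos.2 (modularCharacterFun_pos c)

theorem continuous (hδ : IsModularFunction μ δ) : Continuous δ := by
  rw [funext hδ.eq_inv_modularCharacter]
  exact (NNReal.continuous_coe.comp continuous_modularCharacter).inv₀
    fun c => NNReal.coe_ne_zero.2 (modularCharacterFun_pos c).ne'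

theorem map_inv (hδ : IsModularFunction μ δ) (c : G) : δ c⁻¹ = (δ c)⁻¹ := by
  simp [hδ.eq_inv_modularCharacter]

theorem integral_comp_inv (hδ : IsModularFunction μ δ) {f : G → ℂ} (hf : Continuous f)
    (h'f : HasCompactSupport f) : ∫ x, f x⁻¹ ∂μ = ∫ x, f x * (δ x : ℂ)⁻¹ ∂μ := by
  simp [integral_comp_inv_eq_integral_modularCharacter_smul μ hf h'f,
    hδ.eq_inv_modularCharacter, mul_comm]

theorem integral_comp_mul_left_inv (hδ : IsModularFunction μ δ) {f : G → ℂ} (hf : Continuous f)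
    (h'f : HasCompactSupport f) (c : G) :
    ∫ x, f (c * x) ∂μ.inv = δ c * ∫ x, f x ∂μ.inv := by
  have h := hδ (fun x => f x⁻¹) (hf.comp continuous_inv)
    (h'f.comp_homeomorph (Homeomorph.inv G)) c⁻¹
  simp only [mul_inv_rev, inv_inv, hδ.map_inv, Complex.ofReal_inv] at h
  simp only [integral_inv_eq, h]

end IsModularFunction

theorem group_hom_gives_quasi_invariance_general
    {G H : Type*}
    [Group G] [TopologicalSpace G] [IsTopologicalGroup G]
    [LocallyCompactSpace G] [MeasurableSpace G] [BorelSpace G]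
    [Group H] [TopologicalSpace H] [IsTopologicalGroup H]
    [LocallyCompactSpace H] [MeasurableSpace H] [BorelSpace H]
    (α : Measure G) [α.IsHaarMeasure]
    (β : Measure H) [β.IsHaarMeasure]
    (δG : G → ℝ)
    (hδG : ∀ f : G → ℂ, Continuous f → HasCompactSupport f → ∀ c : G,
      ∫ γ, f (γ * c) ∂α = ((δG c : ℂ))⁻¹ * ∫ γ, f γ ∂α)
    (δH : H → ℝ)
    (hδH : ∀ f : H → ℂ, Continuous f → HasCompactSupport f → ∀ c : H,
      ∫ η, f (η * c) ∂β = ((δH c : ℂ))⁻¹ * ∫ η, f η ∂β)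
    (φ : H →* G) (hφ : Continuous φ) :
    ∀ f : H × G → ℂ, Continuous f → HasCompactSupport f →
      ∫ γ, (∫ η, f (η⁻¹, γ) ∂β) ∂(Measure.map (fun γ : G => γ⁻¹) α)
        = ∫ γ, (∫ η, f (η, (φ η)⁻¹ * γ) * ((δG (φ η) / δH η : ℝ) : ℂ) ∂β)
            ∂(Measure.map (fun γ : G => γ⁻¹) α) := by
  have hG : IsModularFunction α δG := hδG
  have hH : IsModularFunction β δH := hδH
  have hG_cont := hG.continuous
  have hH_cont := hH.continuous
  intro f hf h'f
  have h_inv (γ : G) : ∫ η, f (η⁻¹, γ) ∂β = ∫ η, f (η, γ) * (δH η : ℂ)⁻¹ ∂β :=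
    hH.integral_comp_inv (f := fun η => f (η, γ)) (by fun_prop)
      (h'f.comp_of_leftInverse continuous_fst fun _ => rfl)
  have h_translate (η : H) :
      ∫ γ, f (η, γ) * (δH η : ℂ)⁻¹ ∂α.inv
        = ∫ γ, f (η, (φ η)⁻¹ * γ) * ((δG (φ η) / δH η : ℝ) : ℂ) ∂α.inv := by
    have h := hG.integral_comp_mul_left_inv (f := fun γ => f (η, (φ η)⁻¹ * γ))
      (by fun_prop) (h'f.comp_of_leftInverse (s := fun p => φ η * p.2) (by fun_prop)
        fun _ => by simp) (φ η)
    simp only [inv_mul_cancel_left] at h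
    rw [integral_mul_const, integral_mul_const, h]
    push_cast
    ring
  rw [← inv_def]
  simp_rw [h_inv]
  rw [integral_integral_swap_of_hasCompactSupport (f := fun γ η => f (η, γ) * (δH η : ℂ)⁻¹)
    (by fun_prop (disch := intros; simp [(hH.pos _).ne']))
    ((h'f.comp_of_leftInverse continuous_swap Prod.swap_swap).mul_right)]
  simp_rw [h_translate]
  exact integral_integral_swap_of_hasCompactSupport
    (f := fun γ η => f (η, (φ η)⁻¹ * γ) * ((δG (φ η) / δH η : ℝ) : ℂ))
    (by fun_prop (disch := intros; simp [(hH.pos _).ne']))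
    ((h'f.comp_of_leftInverse (s := fun q => (φ q.1 * q.2, q.1)) (by fun_prop)
      fun _ => by simp).mul_right) |>.symm

/-- a continuous homomorphism `φ : H → G` of locally compact Hausdorff
groups makes the right Haar measure `α⁻¹ = inv_* α` on `G` quasi-invariant for the
action `η·γ = φ(η)γ`, with adjoining function `Δ(η, ·) = δ_G(φ(η))/δ_H(η)`:
`∫∫ f(η⁻¹, γ) dβ dα⁻¹ = ∫∫ f(η, φ(η)⁻¹γ) δ_G(φ(η))/δ_H(η) dβ dα⁻¹`. -/
theorem group_hom_gives_quasi_invariance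
    {G H : Type*}
    [Group G] [TopologicalSpace G] [IsTopologicalGroup G]
    [LocallyCompactSpace G] [T2Space G] [MeasurableSpace G] [BorelSpace G]
    [Group H] [TopologicalSpace H] [IsTopologicalGroup H]
    [LocallyCompactSpace H] [T2Space H] [MeasurableSpace H] [BorelSpace H]
    (α : Measure G) [α.IsHaarMeasure]
    (β : Measure H) [β.IsHaarMeasure]
    (δG : G → ℝ) (hδGpos : ∀ γ, 0 < δG γ)
    (hδG : ∀ f : G → ℂ, Continuous f → HasCompactSupport f → ∀ c : G,
      ∫ γ, f (γ * c) ∂α = ((δG c : ℂ))⁻¹ * ∫ γ, f γ ∂α)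
    (δH : H → ℝ) (hδHpos : ∀ η, 0 < δH η)
    (hδH : ∀ f : H → ℂ, Continuous f → HasCompactSupport f → ∀ c : H,
      ∫ η, f (η * c) ∂β = ((δH c : ℂ))⁻¹ * ∫ η, f η ∂β)
    (φ : H →* G) (hφ : Continuous φ) :
    ∀ f : H × G → ℂ, Continuous f → HasCompactSupport f →
      ∫ γ, (∫ η, f (η⁻¹, γ) ∂β) ∂(Measure.map (fun γ : G => γ⁻¹) α)
        = ∫ γ, (∫ η, f (η, (φ η)⁻¹ * γ) * ((δG (φ η) / δH η : ℝ) : ℂ) ∂β)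
            ∂(Measure.map (fun γ : G => γ⁻¹) α) :=
  group_hom_gives_quasi_invariance_general α β δG hδG δH hδH φ hφ
end

section
/- Let G be a locally compact Hausdorff group with left Haar measure α acting continuously on the left on a locally compact Hausdorff space X, and let Δ : G × X → ℝ_{>0} be a continuous function satisfying the cocycle identity Δ(ζγ, x) = Δ(ζ, γ·x)·Δ(γ, x) for all ζ, γ ∈ G and x ∈ X. For φ ∈ C_c(G) and f ∈ C_c(X) define (φ·f)(x) = ∫_G φ(γ) f(γ⁻¹·x) Δ(γ, γ⁻¹·x)^{1/2} dα(γ), and define the convolution (φ * φ′)(γ) = ∫_G φ(ζ) φ′(ζ⁻¹γ) dα(ζ). Then for all φ, φ′ ∈ C_c(G) and f ∈ C_c(X), ((φ * φ′)·f)(x) = (φ·(φ′·f))(x) for every x ∈ X. -/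
open MeasureTheory
open scoped Pointwise

/-!
Both sides are iterated integrals over `G × G` of a continuous function whose support lies in
`(supp φ · supp φ') × supp φ`, so Fubini applies.
After swapping, the inner integral is translated by `ζ` using left invariance of `α`, and the
cocycle identity splits `Δ(ζγ, γ⁻¹ζ⁻¹x)^{1/2}` into `Δ(ζ, ζ⁻¹x)^{1/2} Δ(γ, γ⁻¹ζ⁻¹x)^{1/2}`,
which is exactly the integrand of `φ·(φ'·f)`.
-/

section Convolution

variable {G 𝕜 : Type*} [Group G] [TopologicalSpace G] [IsTopologicalGroup G] [RCLike 𝕜]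

noncomputable def groupConvolution [MeasurableSpace G] (α : Measure G) (φ φ' : G → 𝕜) (γ : G) : 𝕜 :=
  ∫ ζ, φ ζ * φ' (ζ⁻¹ * γ) ∂α

theorem hasCompactSupport_convolutionKernel {φ φ' : G → 𝕜}
    (hφ : HasCompactSupport φ) (hφ' : HasCompactSupport φ') :
    HasCompactSupport fun p : G × G => φ p.2 * φ' (p.2⁻¹ * p.1) := by
  refine HasCompactSupport.intro ((hφ.mul hφ').prod hφ) fun ⟨γ, ζ⟩ hp => ?_
  by_cases hζ : ζ ∈ tsupport φ
  · have hγ : ζ⁻¹ * γ ∉ tsupport φ' := fun h => hp ⟨by simpa using Set.mul_mem_mul hζ h, hζ⟩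
    simp [image_eq_zero_of_notMem_tsupport hγ]
  · simp [image_eq_zero_of_notMem_tsupport hζ]

theorem integral_groupConvolution_mul [MeasurableSpace G] [BorelSpace G] (α : Measure G)
    [IsFiniteMeasureOnCompacts α] [α.IsMulLeftInvariant] {φ φ' h : G → 𝕜}
    (hφ : Continuous φ) (hφc : HasCompactSupport φ)
    (hφ' : Continuous φ') (hφ'c : HasCompactSupport φ') (hh : Continuous h) :
    ∫ γ, groupConvolution α φ φ' γ * h γ ∂α = ∫ ζ, φ ζ * ∫ γ, φ' γ * h (ζ * γ) ∂α ∂α := by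
  have hcont : Continuous fun p : G × G => φ p.2 * φ' (p.2⁻¹ * p.1) * h p.1 := by fun_prop
  calc ∫ γ, groupConvolution α φ φ' γ * h γ ∂α
      = ∫ γ, ∫ ζ, φ ζ * φ' (ζ⁻¹ * γ) * h γ ∂α ∂α := by
        simp only [groupConvolution, integral_mul_const]
    _ = ∫ ζ, ∫ γ, φ ζ * φ' (ζ⁻¹ * γ) * h γ ∂α ∂α :=
        integral_integral_swap_of_hasCompactSupport (f := fun γ ζ => φ ζ * φ' (ζ⁻¹ * γ) * h γ)
          hcont (hasCompactSupport_convolutionKernel hφc hφ'c).mul_right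
    _ = ∫ ζ, φ ζ * ∫ γ, φ' γ * h (ζ * γ) ∂α ∂α := by
        congr 1 with ζ
        rw [← integral_mul_left_eq_self _ ζ, ← integral_const_mul]
        simp only [inv_mul_cancel_left, mul_assoc]

end Convolution

section Action

variable {G X 𝕜 : Type*} [Group G] [MulAction G X]

noncomputable def twistedAction [MeasurableSpace G] [RCLike 𝕜] (α : Measure G) (Δ : G × X → ℝ)
    (φ : G → 𝕜) (f : X → 𝕜) (x : X) : 𝕜 :=
  ∫ γ, φ γ * f (γ⁻¹ • x) * (Real.sqrt (Δ (γ, γ⁻¹ • x)) : 𝕜) ∂α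

theorem sqrt_cocycle_mul {Δ : G × X → ℝ} (hΔ : ∀ p, 0 ≤ Δ p)
    (hcocycle : ∀ (ζ γ : G) (x : X), Δ (ζ * γ, x) = Δ (ζ, γ • x) * Δ (γ, x)) (ζ γ : G) (x : X) :
    Real.sqrt (Δ (ζ * γ, γ⁻¹ • ζ⁻¹ • x))
      = Real.sqrt (Δ (ζ, ζ⁻¹ • x)) * Real.sqrt (Δ (γ, γ⁻¹ • ζ⁻¹ • x)) := by
  rw [hcocycle, smul_inv_smul, Real.sqrt_mul (hΔ _)]

theorem twistedAction_groupConvolution [TopologicalSpace G] [IsTopologicalGroup G]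
    [MeasurableSpace G] [BorelSpace G] [TopologicalSpace X] [ContinuousSMul G X]
    [RCLike 𝕜] (α : Measure G) [IsFiniteMeasureOnCompacts α] [α.IsMulLeftInvariant]
    {Δ : G × X → ℝ} (hΔ : ∀ p, 0 ≤ Δ p) (hΔcont : Continuous Δ)
    (hcocycle : ∀ (ζ γ : G) (x : X), Δ (ζ * γ, x) = Δ (ζ, γ • x) * Δ (γ, x))
    {φ φ' : G → 𝕜} (hφ : Continuous φ) (hφc : HasCompactSupport φ)
    (hφ' : Continuous φ') (hφ'c : HasCompactSupport φ') {f : X → 𝕜} (hf : Continuous f)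
    (x : X) :
    twistedAction α Δ (groupConvolution α φ φ') f x
      = twistedAction α Δ φ (twistedAction α Δ φ' f) x := by
  have hh : Continuous fun γ : G => f (γ⁻¹ • x) * (Real.sqrt (Δ (γ, γ⁻¹ • x)) : 𝕜) := by
    fun_prop
  simp only [twistedAction, mul_assoc]
  rw [integral_groupConvolution_mul α hφ hφc hφ' hφ'c hh]
  congr 1 with ζ
  simp only [mul_inv_rev, mul_smul, sqrt_cocycle_mul hΔ hcocycle, RCLike.ofReal_mul]
  rw [← integral_mul_const]
  congr 2 with γ
  ring

end Action

theorem convolution_action_assoc_general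
    {G X : Type*}
    [Group G] [TopologicalSpace G] [IsTopologicalGroup G]
    [MeasurableSpace G] [BorelSpace G]
    [TopologicalSpace X]
    [MulAction G X] [ContinuousSMul G X]
    (α : Measure G) [α.IsHaarMeasure]
    (Δ : G × X → ℝ) (hΔpos : ∀ p, 0 < Δ p) (hΔcont : Continuous Δ)
    (hcocycle : ∀ (ζ γ : G) (x : X), Δ (ζ * γ, x) = Δ (ζ, γ • x) * Δ (γ, x))
    (φ φ' : G → ℂ) (hφ : Continuous φ) (hφc : HasCompactSupport φ)
    (hφ' : Continuous φ') (hφ'c : HasCompactSupport φ')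
    (f : X → ℂ) (hf : Continuous f) :
    ∀ x : X,
      ∫ γ, (∫ ζ, φ ζ * φ' (ζ⁻¹ * γ) ∂α) * f (γ⁻¹ • x)
          * (Real.sqrt (Δ (γ, γ⁻¹ • x)) : ℂ) ∂α
      = ∫ γ, φ γ *
          (∫ ζ, φ' ζ * f (ζ⁻¹ • γ⁻¹ • x)
              * (Real.sqrt (Δ (ζ, ζ⁻¹ • γ⁻¹ • x)) : ℂ) ∂α)
          * (Real.sqrt (Δ (γ, γ⁻¹ • x)) : ℂ) ∂α :=
  twistedAction_groupConvolution α (fun p => (hΔpos p).le) hΔcont hcocycle hφ hφc hφ' hφ'c hf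

/-- for a locally compact Hausdorff group `G` with left Haar measure `α`
acting continuously on a locally compact Hausdorff space `X`, and a continuous positive
cocycle `Δ` on `G × X`, the action `(φ·f)(x) = ∫ φ(γ) f(γ⁻¹x) Δ(γ, γ⁻¹x)^{1/2} dα(γ)`
of `C_c(G)` on `C_c(X)` is compatible with convolution: `(φ * φ')·f = φ·(φ'·f)`. -/
theorem convolution_action_assoc
    {G X : Type*}
    [Group G] [TopologicalSpace G] [IsTopologicalGroup G]
    [LocallyCompactSpace G] [T2Space G] [MeasurableSpace G] [BorelSpace G]
    [TopologicalSpace X] [LocallyCompactSpace X] [T2Space X]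
    [MulAction G X] [ContinuousSMul G X]
    (α : Measure G) [α.IsHaarMeasure]
    (Δ : G × X → ℝ) (hΔpos : ∀ p, 0 < Δ p) (hΔcont : Continuous Δ)
    (hcocycle : ∀ (ζ γ : G) (x : X), Δ (ζ * γ, x) = Δ (ζ, γ • x) * Δ (γ, x))
    (φ φ' : G → ℂ) (hφ : Continuous φ) (hφc : HasCompactSupport φ)
    (hφ' : Continuous φ') (hφ'c : HasCompactSupport φ')
    (f : X → ℂ) (hf : Continuous f) (hfc : HasCompactSupport f) :
    ∀ x : X,
      ∫ γ, (∫ ζ, φ ζ * φ' (ζ⁻¹ * γ) ∂α) * f (γ⁻¹ • x)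
          * (Real.sqrt (Δ (γ, γ⁻¹ • x)) : ℂ) ∂α
      = ∫ γ, φ γ *
          (∫ ζ, φ' ζ * f (ζ⁻¹ • γ⁻¹ • x)
              * (Real.sqrt (Δ (ζ, ζ⁻¹ • γ⁻¹ • x)) : ℂ) ∂α)
          * (Real.sqrt (Δ (γ, γ⁻¹ • x)) : ℂ) ∂α :=
  convolution_action_assoc_general α Δ hΔpos hΔcont hcocycle φ φ' hφ hφc hφ' hφ'c f hf
end

section
/- Let G be a locally compact Hausdorff group with left Haar measure α acting continuously on the left on a locally compact Hausdorff space X, let λ be a positive Radon measure on X, and let Δ : G × X → ℝ_{>0} be a continuous function satisfying the cocycle identity Δ(ζγ, x) = Δ(ζ, γ·x)·Δ(γ, x) and the quasi-invariance condition: for every F ∈ C_c(G × X), ∫_X ∫_G F(γ⁻¹, x) dα(γ) dλ(x) = ∫_X ∫_G F(γ, γ⁻¹·x) Δ(γ, γ⁻¹·x) dα(γ) dλ(x). For φ ∈ C_c(G) and f ∈ C_c(X) define (φ·f)(x) = ∫_G φ(γ) f(γ⁻¹·x) Δ(γ, γ⁻¹·x)^{1/2} dα(γ), and define φ*(γ)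 = conj(φ(γ⁻¹)). Then for all φ ∈ C_c(G) and f, g ∈ C_c(X), ∫_X conj((φ·f)(x)) · g(x) dλ(x) = ∫_X conj(f(x)) · (φ*·g)(x) dλ(x); that is, the operator f ↦ φ·f on C_c(X) ⊆ L²(X, λ) has formal adjoint g ↦ φ*·g. -/
open MeasureTheory ComplexConjugate

/-!
Write `⟨φ·f, g⟩` as `∫_X ∫_G F(γ⁻¹, x)` for
`F(γ, x) = conj φ(γ⁻¹) · g(x) · conj f(γ·x) · Δ(γ⁻¹, γ·x)^{1/2}` and apply quasi-invariance to `F`.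
The cocycle identity gives `Δ(γ⁻¹, x) = Δ(γ, γ⁻¹·x)⁻¹`, so the extra factor `Δ(γ, γ⁻¹·x)` turns
`Δ(γ⁻¹, x)^{1/2}` into `Δ(γ, γ⁻¹·x)^{1/2}`, and the new integrand is that of `⟨f, φ*·g⟩`.
-/

section Cocycle

variable {G X M₀ : Type*} [Group G] [MulAction G X] [GroupWithZero M₀] {Δ : G × X → M₀}

theorem cocycle_one_eq_one (hΔ : ∀ p, Δ p ≠ 0)
    (hcocycle : ∀ (ζ γ : G) (x : X), Δ (ζ * γ, x) = Δ (ζ, γ • x) * Δ (γ, x)) (x : X) :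
    Δ (1, x) = 1 := by
  have h := hcocycle 1 1 x
  rw [one_mul, one_smul] at h
  exact (mul_eq_left₀ (hΔ (1, x))).mp h.symm

theorem cocycle_inv_eq_inv (hΔ : ∀ p, Δ p ≠ 0)
    (hcocycle : ∀ (ζ γ : G) (x : X), Δ (ζ * γ, x) = Δ (ζ, γ • x) * Δ (γ, x)) (γ : G) (x : X) :
    Δ (γ⁻¹, x) = (Δ (γ, γ⁻¹ • x))⁻¹ := by
  have h := hcocycle γ⁻¹ γ (γ⁻¹ • x)
  rw [inv_mul_cancel, smul_inv_smul, cocycle_one_eq_one hΔ hcocycle] at h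
  exact (inv_eq_of_mul_eq_one_left h.symm).symm

end Cocycle

theorem HasCompactSupport.mul_prod_s12 {A B R : Type*} [TopologicalSpace A] [TopologicalSpace B]
    [MulZeroClass R] {a : A → R} {b : B → R} (ha : HasCompactSupport a)
    (hb : HasCompactSupport b) : HasCompactSupport fun p : A × B => a p.1 * b p.2 := by
  refine (ha.isCompact.prod hb.isCompact).of_isClosed_subset (isClosed_tsupport _)
    (closure_minimal (fun p hp => ?_) ((isClosed_tsupport a).prod (isClosed_tsupport b)))
  exact ⟨subset_tsupport _ (left_ne_zero_of_mul hp), subset_tsupport _ (right_ne_zero_of_mul hp)⟩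

section Kernel

variable {G X : Type*} [Group G] [MulAction G X]

noncomputable def pairingKernel (Δ : G × X → ℝ) (φ : G → ℂ) (f g : X → ℂ) : G × X → ℂ :=
  fun p => conj (φ p.1⁻¹) * g p.2 * (conj (f (p.1 • p.2)) * √(Δ (p.1⁻¹, p.1 • p.2)))

variable [TopologicalSpace G] [ContinuousInv G] [TopologicalSpace X]

theorem hasCompactSupport_pairingKernel (Δ : G × X → ℝ) {φ : G → ℂ} (f : X → ℂ) {g : X → ℂ}
    (hφ : HasCompactSupport φ) (hg : HasCompactSupport g) :
    HasCompactSupport (pairingKernel Δ φ f g) := by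
  have hφ' : HasCompactSupport fun γ : G => conj (φ γ⁻¹) :=
    (hφ.comp_isClosedEmbedding (Homeomorph.inv G).isClosedEmbedding).comp_left (map_zero _)
  exact (hφ'.mul_prod_s12 hg).mul_right

variable [ContinuousSMul G X]

theorem continuous_pairingKernel {Δ : G × X → ℝ} {φ : G → ℂ} {f g : X → ℂ}
    (hΔ : Continuous Δ) (hφ : Continuous φ) (hf : Continuous f) (hg : Continuous g) :
    Continuous (pairingKernel Δ φ f g) := by
  unfold pairingKernel
  fun_prop

end Kernel

theorem twisted_action_formal_adjoint_general
    {G X : Type*}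
    [Group G] [TopologicalSpace G] [IsTopologicalGroup G]
    [MeasurableSpace G]
    [TopologicalSpace X]
    [MulAction G X] [ContinuousSMul G X]
    [MeasurableSpace X]
    (α : Measure G)
    (lam : Measure X)
    (Δ : G × X → ℝ) (hΔpos : ∀ p, 0 < Δ p) (hΔcont : Continuous Δ)
    (hcocycle : ∀ (ζ γ : G) (x : X), Δ (ζ * γ, x) = Δ (ζ, γ • x) * Δ (γ, x))
    (hquasi : ∀ F : G × X → ℂ, Continuous F → HasCompactSupport F →
      ∫ x, (∫ γ, F (γ⁻¹, x) ∂α) ∂lam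
        = ∫ x, (∫ γ, F (γ, γ⁻¹ • x) * ((Δ (γ, γ⁻¹ • x) : ℝ) : ℂ) ∂α) ∂lam)
    (φ : G → ℂ) (hφ : Continuous φ) (hφc : HasCompactSupport φ)
    (f g : X → ℂ) (hf : Continuous f)
    (hg : Continuous g) (hgc : HasCompactSupport g) :
    ∫ x, (starRingEnd ℂ)
          (∫ γ, φ γ * f (γ⁻¹ • x) * (Real.sqrt (Δ (γ, γ⁻¹ • x)) : ℂ) ∂α)
        * g x ∂lam
      = ∫ x, (starRingEnd ℂ) (f x)
          * (∫ γ, (starRingEnd ℂ) (φ γ⁻¹) * g (γ⁻¹ • x)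
              * (Real.sqrt (Δ (γ, γ⁻¹ • x)) : ℂ) ∂α) ∂lam := by
  have hsqrt (γ : G) (x : X) :
      √(Δ (γ⁻¹, x)) * Δ (γ, γ⁻¹ • x) = √(Δ (γ, γ⁻¹ • x)) := by
    rw [cocycle_inv_eq_inv (fun p => (hΔpos p).ne') hcocycle, Real.sqrt_inv, inv_mul_eq_div,
      Real.div_sqrt]
  have key := hquasi _ (continuous_pairingKernel hΔcont hφ hf hg)
    (hasCompactSupport_pairingKernel Δ f hφc hgc)
  convert key using 3 with x x
  · rw [← integral_conj, ← integral_mul_const]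
    congr 1 with γ
    simp only [pairingKernel, inv_inv, map_mul, Complex.conj_ofReal]
    ring
  · rw [← integral_const_mul]
    congr 1 with γ
    simp only [pairingKernel, smul_inv_smul]
    rw [← hsqrt γ x, Complex.ofReal_mul]
    ring

/-- if `λ` is quasi-invariant for the continuous action of the locally
compact Hausdorff group `G` on `X`, with continuous positive cocycle `Δ`, then the
twisted action `(φ·f)(x) = ∫ φ(γ) f(γ⁻¹x) Δ(γ,γ⁻¹x)^{1/2} dα(γ)` on
`C_c(X) ⊆ L²(X,λ)` has formal adjoint `g ↦ φ*·g` with `φ*(γ) = conj(φ(γ⁻¹))`. -/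
theorem twisted_action_formal_adjoint
    {G X : Type*}
    [Group G] [TopologicalSpace G] [IsTopologicalGroup G]
    [LocallyCompactSpace G] [T2Space G] [MeasurableSpace G] [BorelSpace G]
    [TopologicalSpace X] [LocallyCompactSpace X] [T2Space X]
    [MulAction G X] [ContinuousSMul G X]
    [MeasurableSpace X] [BorelSpace X]
    (α : Measure G) [α.IsHaarMeasure]
    (lam : Measure X) [lam.Regular]
    (Δ : G × X → ℝ) (hΔpos : ∀ p, 0 < Δ p) (hΔcont : Continuous Δ)
    (hcocycle : ∀ (ζ γ : G) (x : X), Δ (ζ * γ, x) = Δ (ζ, γ • x) * Δ (γ, x))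
    (hquasi : ∀ F : G × X → ℂ, Continuous F → HasCompactSupport F →
      ∫ x, (∫ γ, F (γ⁻¹, x) ∂α) ∂lam
        = ∫ x, (∫ γ, F (γ, γ⁻¹ • x) * ((Δ (γ, γ⁻¹ • x) : ℝ) : ℂ) ∂α) ∂lam)
    (φ : G → ℂ) (hφ : Continuous φ) (hφc : HasCompactSupport φ)
    (f g : X → ℂ) (hf : Continuous f) (hfc : HasCompactSupport f)
    (hg : Continuous g) (hgc : HasCompactSupport g) :
    ∫ x, (starRingEnd ℂ)
          (∫ γ, φ γ * f (γ⁻¹ • x) * (Real.sqrt (Δ (γ, γ⁻¹ • x)) : ℂ) ∂α)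
        * g x ∂lam
      = ∫ x, (starRingEnd ℂ) (f x)
          * (∫ γ, (starRingEnd ℂ) (φ γ⁻¹) * g (γ⁻¹ • x)
              * (Real.sqrt (Δ (γ, γ⁻¹ • x)) : ℂ) ∂α) ∂lam :=
  twisted_action_formal_adjoint_general α lam Δ hΔpos hΔcont hcocycle hquasi φ hφ hφc f g hf hg hgc
end

section
/- Let H be a locally compact Hausdorff group with left Haar measure β acting continuously and properly on the right on a locally compact Hausdorff space X, with orbit map q : X → X/H, and let ν be a positive Radon measure on the (locally compact Hausdorff) orbit space X/H. For f ∈ C_c(X × H), the function x ↦ ∫_H ∫_H f(x·η, h) dβ(h) dβ(η) is H-invariant and hence descends to a function on X/H; define I(f) = ∫_{X/H} of this descended function dν. Then I is invariant under the inversion of the transformation groupoid: I(f ∘ inv) = I(f) for all f ∈ C_c(X × H), where inv(x, h) = (x·h, h⁻¹). -/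
open MeasureTheory MulOpposite

/-!
Both integrands descend to the orbit space, so it suffices to compare them on each orbit.
Fixing `x`, the function `φ (η, h) = f (x·η, h)` on `H × H` is continuous with compact support
because the action is proper, and the claim becomes the invariance of `∫∫ φ dβ dβ` under
`(η, h) ↦ (η h, h⁻¹)`: substitute `h ↦ η⁻¹ h`, swap the integrals, and substitute `η ↦ h η`.
-/

theorem integral_integral_mul_inv_eq {G E : Type*} [Group G] [TopologicalSpace G]
    [IsTopologicalGroup G] [MeasurableSpace G] [BorelSpace G]
    [NormedAddCommGroup E] [NormedSpace ℝ E] (μ : Measure G) [μ.IsMulLeftInvariant]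
    [IsFiniteMeasureOnCompacts μ] {φ : G × G → E} (hφ : Continuous φ)
    (hφc : HasCompactSupport φ) :
    ∫ a, ∫ b, φ (a * b, b⁻¹) ∂μ ∂μ = ∫ a, ∫ b, φ (a, b) ∂μ ∂μ := by
  have hsheared : HasCompactSupport fun p : G × G => φ (p.2, p.2⁻¹ * p.1) :=
    hφc.comp_homeomorph ((Homeomorph.prodComm G G).trans (Homeomorph.shearMulRight G).symm)
  calc ∫ a, ∫ b, φ (a * b, b⁻¹) ∂μ ∂μ = ∫ a, ∫ b, φ (b, b⁻¹ * a) ∂μ ∂μ := by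
        congr 1 with a
        rw [← integral_mul_left_eq_self (fun b => φ (b, b⁻¹ * a)) a]
        simp only [mul_inv_rev, inv_mul_cancel_right]
    _ = ∫ b, ∫ a, φ (b, b⁻¹ * a) ∂μ ∂μ :=
        integral_integral_swap_of_hasCompactSupport (f := fun a b => φ (b, b⁻¹ * a))
          (hφ.comp (continuous_snd.prodMk (continuous_snd.inv.mul continuous_fst))) hsheared
    _ = ∫ a, ∫ b, φ (a, b) ∂μ ∂μ := by
        congr 1 with b
        exact integral_mul_left_eq_self (fun a => φ (b, a)) b⁻¹

section ProperAction

variable {G X : Type*} [TopologicalSpace G] [TopologicalSpace X] [SMul Gᵐᵒᵖ X]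

theorem IsProperMap.isCompact_setOf_op_smul_mem
    (hproper : IsProperMap (fun p : X × G => (p.1, op p.2 • p.1))) (x : X) {K : Set X}
    (hK : IsCompact K) : IsCompact {g : G | op g • x ∈ K} := by
  convert (hproper.isCompact_preimage ((isCompact_singleton (x := x)).prod hK)).image
    continuous_snd
  ext g
  simp

theorem IsProperMap.hasCompactSupport_comp_op_smul {Y E : Type*} [R1Space G]
    [TopologicalSpace Y] [R1Space Y] [Zero E]
    (hproper : IsProperMap (fun p : X × G => (p.1, op p.2 • p.1))) (x : X) {f : X × Y → E}
    (hf : HasCompactSupport f) : HasCompactSupport fun p : G × Y => f (op p.1 • x, p.2) := by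
  refine HasCompactSupport.intro ((hproper.isCompact_setOf_op_smul_mem x
    (hf.image continuous_fst)).prod (hf.image continuous_snd)) fun p hp => ?_
  by_contra hne
  have hmem : (op p.1 • x, p.2) ∈ tsupport f := subset_tsupport f hne
  exact hp ⟨⟨_, hmem, rfl⟩, ⟨_, hmem, rfl⟩⟩

end ProperAction

theorem transverse_functional_inversion_invariant_general
    {H X : Type*}
    [Group H] [TopologicalSpace H] [IsTopologicalGroup H]
    [T2Space H] [MeasurableSpace H] [BorelSpace H]
    [TopologicalSpace X]
    [MulAction Hᵐᵒᵖ X] [ContinuousSMul Hᵐᵒᵖ X]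
    [MeasurableSpace (Quotient (MulAction.orbitRel Hᵐᵒᵖ X))]
    (β : Measure H) [β.IsHaarMeasure]
    (hproper : IsProperMap (fun p : X × H => (p.1, op p.2 • p.1)))
    (ν : Measure (Quotient (MulAction.orbitRel Hᵐᵒᵖ X))) :
    ∀ f : X × H → ℂ, Continuous f → HasCompactSupport f →
      ∀ g g' : Quotient (MulAction.orbitRel Hᵐᵒᵖ X) → ℂ,
        (∀ x : X, g (Quotient.mk (MulAction.orbitRel Hᵐᵒᵖ X) x)
            = ∫ η, (∫ h, f (op η • x, h) ∂β) ∂β) →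
        (∀ x : X, g' (Quotient.mk (MulAction.orbitRel Hᵐᵒᵖ X) x)
            = ∫ η, (∫ h, f (op h • (op η • x), h⁻¹) ∂β) ∂β) →
        ∫ ω, g' ω ∂ν = ∫ ω, g ω ∂ν := by
  intro f hf hfc g g' hg hg'
  suffices g' = g by rw [this]
  funext ω
  induction ω using Quotient.inductionOn with
  | h x =>
    rw [hg', hg]
    simp only [smul_smul, ← op_mul]
    exact integral_integral_mul_inv_eq β
      (hf.comp ((continuous_op.comp continuous_fst).smul continuous_const |>.prodMk
        continuous_snd))
      (hproper.hasCompactSupport_comp_op_smul x hfc)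

/-- for a continuous proper right action of a locally compact Hausdorff
group `H` (left Haar measure `β`) on a locally compact Hausdorff space `X`, and a
positive Radon measure `ν` on `X/H`, the functional
`I(f) = ∫_{X/H} [x ↦ ∫_H ∫_H f(x·η, h) dβ(h) dβ(η)] dν` on `C_c(X × H)` is invariant
under the inversion `inv(x,h) = (x·h, h⁻¹)` of the transformation groupoid. -/
theorem transverse_functional_inversion_invariant
    {H X : Type*}
    [Group H] [TopologicalSpace H] [IsTopologicalGroup H]
    [LocallyCompactSpace H] [T2Space H] [MeasurableSpace H] [BorelSpace H]
    [TopologicalSpace X] [LocallyCompactSpace X] [T2Space X]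
    [MulAction Hᵐᵒᵖ X] [ContinuousSMul Hᵐᵒᵖ X]
    [MeasurableSpace (Quotient (MulAction.orbitRel Hᵐᵒᵖ X))]
    [BorelSpace (Quotient (MulAction.orbitRel Hᵐᵒᵖ X))]
    (β : Measure H) [β.IsHaarMeasure]
    (hproper : IsProperMap (fun p : X × H => (p.1, op p.2 • p.1)))
    (ν : Measure (Quotient (MulAction.orbitRel Hᵐᵒᵖ X))) [ν.Regular] :
    ∀ f : X × H → ℂ, Continuous f → HasCompactSupport f →
      ∀ g g' : Quotient (MulAction.orbitRel Hᵐᵒᵖ X) → ℂ,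
        (∀ x : X, g (Quotient.mk (MulAction.orbitRel Hᵐᵒᵖ X) x)
            = ∫ η, (∫ h, f (op η • x, h) ∂β) ∂β) →
        (∀ x : X, g' (Quotient.mk (MulAction.orbitRel Hᵐᵒᵖ X) x)
            = ∫ η, (∫ h, f (op h • (op η • x), h⁻¹) ∂β) ∂β) →
        ∫ ω, g' ω ∂ν = ∫ ω, g ω ∂ν :=
  transverse_functional_inversion_invariant_general β hproper ν
end

section
/- Let H be a locally compact Hausdorff group acting continuously and properly on the right on a locally compact Hausdorff space X, and let λ be a positive Radon measure on X. Then for all continuous compactly supported functions f, g : X → ℂ, the function η ↦ ∫_X conj(f(x)) g(x·η) dλ(x) on H is continuous and has compact support. -/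
/-!
The integrand `(x, η) ↦ conj (f x) * g (x · η)` is jointly continuous and vanishes for `x` outside
the compact set `tsupport f`, so the parametric integral is continuous. It can only be nonzero at
`η` if `(x, x · η) ∈ tsupport f ×ˢ tsupport g` for some `x`, and properness of the action makes the
set of such `η` compact.
-/

open MeasureTheory MulOpposite

section ProperAction

variable {H X : Type*} [Monoid H] [TopologicalSpace H] [TopologicalSpace X]
  [MulAction Hᵐᵒᵖ X]

lemma isCompact_setOf_exists_op_smul_mem
    (hproper : IsProperMap (fun p : X × H => (p.1, op p.2 • p.1)))
    {K L : Set X} (hK : IsCompact K) (hL : IsCompact L) :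
    IsCompact {η : H | ∃ x ∈ K, op η • x ∈ L} := by
  convert (hproper.isCompact_preimage (hK.prod hL)).image continuous_snd using 1
  ext η
  simp [and_assoc]

variable {R : Type*} [NonUnitalNormedRing R] [NormedSpace ℝ R] [MeasurableSpace X]
  {f g : X → R}

lemma hasCompactSupport_integral_mul_op_smul [R1Space H]
    (hproper : IsProperMap (fun p : X × H => (p.1, op p.2 • p.1)))
    (μ : Measure X) (hfc : HasCompactSupport f) (hgc : HasCompactSupport g) :
    HasCompactSupport (fun η : H => ∫ x, f x * g (op η • x) ∂μ) := by
  refine .intro (isCompact_setOf_exists_op_smul_mem hproper hfc hgc) fun η hη => ?_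
  refine integral_eq_zero_of_ae (.of_forall fun x => ?_)
  by_contra hne
  exact hη ⟨x, subset_tsupport f (left_ne_zero_of_mul hne),
    subset_tsupport g (right_ne_zero_of_mul hne)⟩

lemma continuous_integral_mul_op_smul [ContinuousSMul Hᵐᵒᵖ X] [OpensMeasurableSpace X]
    (μ : Measure X) [IsFiniteMeasureOnCompacts μ]
    (hf : Continuous f) (hfc : HasCompactSupport f) (hg : Continuous g) :
    Continuous (fun η : H => ∫ x, f x * g (op η • x) ∂μ) := by
  rw [← continuousOn_univ]
  refine continuousOn_integral_of_compact_support hfc (Continuous.continuousOn ?_)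
    fun η x _ hx => by simp [image_eq_zero_of_notMem_tsupport hx]
  exact (hf.comp continuous_snd).mul
    (hg.comp ((continuous_op.comp continuous_fst).smul continuous_snd))

end ProperAction

theorem inner_product_mem_Cc_general
    {H X : Type*}
    [Group H] [TopologicalSpace H]
    [T2Space H]
    [TopologicalSpace X]
    [MulAction Hᵐᵒᵖ X] [ContinuousSMul Hᵐᵒᵖ X]
    [MeasurableSpace X] [BorelSpace X]
    (hproper : IsProperMap (fun p : X × H => (p.1, op p.2 • p.1)))
    (lam : Measure X) [lam.Regular]
    (f g : X → ℂ) (hf : Continuous f) (hfc : HasCompactSupport f)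
    (hg : Continuous g) (hgc : HasCompactSupport g) :
    Continuous (fun η : H => ∫ x, (starRingEnd ℂ) (f x) * g (op η • x) ∂lam) ∧
    HasCompactSupport (fun η : H => ∫ x, (starRingEnd ℂ) (f x) * g (op η • x) ∂lam) := by
  have hfc' : HasCompactSupport (fun x => starRingEnd ℂ (f x)) := hfc.comp_left (map_zero _)
  exact ⟨continuous_integral_mul_op_smul lam (Complex.continuous_conj.comp hf) hfc' hg,
    hasCompactSupport_integral_mul_op_smul hproper lam hfc' hgc⟩

/-- for a continuous proper right action of a locally compact Hausdorff
group `H` on a locally compact Hausdorff space `X` carrying a positive Radon measure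
`λ`, and `f, g ∈ C_c(X)`, the function `η ↦ ∫ conj(f(x)) g(x·η) dλ(x)` belongs to
`C_c(H)`: it is continuous and compactly supported. -/
theorem inner_product_mem_Cc
    {H X : Type*}
    [Group H] [TopologicalSpace H] [IsTopologicalGroup H]
    [LocallyCompactSpace H] [T2Space H]
    [TopologicalSpace X] [LocallyCompactSpace X] [T2Space X]
    [MulAction Hᵐᵒᵖ X] [ContinuousSMul Hᵐᵒᵖ X]
    [MeasurableSpace X] [BorelSpace X]
    (hproper : IsProperMap (fun p : X × H => (p.1, op p.2 • p.1)))
    (lam : Measure X) [lam.Regular]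
    (f g : X → ℂ) (hf : Continuous f) (hfc : HasCompactSupport f)
    (hg : Continuous g) (hgc : HasCompactSupport g) :
    Continuous (fun η : H => ∫ x, (starRingEnd ℂ) (f x) * g (op η • x) ∂lam) ∧
    HasCompactSupport (fun η : H => ∫ x, (starRingEnd ℂ) (f x) * g (op η • x) ∂lam) :=
  inner_product_mem_Cc_general hproper lam f g hf hfc hg hgc
end
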